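/- For all natural numbers n, x with 1 ≤ n and 1 ≤ x, it holds that 1 + 8·2^(3·x)·(2·2^(3·x) + 1)^(2·(n+1)) + 2·(2·2^(3·x) + 1)^(2·n) < (2·2^(3·x) + 1)^(2·(n+2)). (This is the strict weight decrease establishing orientation of the recurrence rule T1.6: sin_n(s(s(n)), x) → (⟨2⟩ × cos(x)) × sin_n(s(n), x) + (⟨-1⟩ × sin_n(n, x)).) -/
import Mathlib

lemma awpo_key (b m : ℕ) (hb : 8 ≤ b) :
    1 + 8 * b * (2 * b + 1) ^ (m + 2) + 2 * (2 * b + 1) ^ m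
      < (2 * b + 1) ^ (m + 4) := by
  set a := 2 * b + 1 with ha
  have hA : 1 ≤ a ^ m := Nat.one_le_pow _ _ (by omega)
  have h2 : a ^ (m + 2) = a ^ m * a ^ 2 := pow_add a m 2
  have h4 : a ^ (m + 4) = a ^ m * a ^ 4 := pow_add a m 4
  rw [h2, h4]
  have key : 8 * b * a ^ 2 + 4 ≤ a ^ 4 := by
    rw [ha]
    have hb2 : 64 ≤ b * b := Nat.mul_le_mul hb hb
    have hb4 : 64 * (b * b) ≤ (b * b) * (b * b) := Nat.mul_le_mul_right _ hb2
    nlinarith [hb2, hb4]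
  have h5 := Nat.mul_le_mul_left (a ^ m) key
  have h6 : a ^ m * (8 * b * a ^ 2 + 4) = 8 * b * (a ^ m * a ^ 2) + 4 * a ^ m := by ring
  rw [h6] at h5
  linarith [h5, hA]

theorem awpo_orient_T1_6 (n x : ℕ) (hn : 1 ≤ n) (hx : 1 ≤ x) :
    1 + 8 * 2 ^ (3 * x) * (2 * 2 ^ (3 * x) + 1) ^ (2 * (n + 1))
      + 2 * (2 * 2 ^ (3 * x) + 1) ^ (2 * n)
    < (2 * 2 ^ (3 * x) + 1) ^ (2 * (n + 2)) := by
  have hb : 8 ≤ 2 ^ (3 * x) := by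
    calc 8 = 2 ^ 3 := by norm_num
    _ ≤ 2 ^ (3 * x) := Nat.pow_le_pow_right (by norm_num) (by omega)
  have := awpo_key (2 ^ (3 * x)) (2 * n) hb
  have e1 : 2 * (n + 1) = 2 * n + 2 := by ring
  have e2 : 2 * (n + 2) = 2 * n + 4 := by ring
  rw [e1, e2]
  exact this
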